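/- arXiv:2202.13948 — 2 statements merged into one kernel-verified Lean document; each statement's English description precedes it below -/
import Mathlib

section
/- Let g = ∑_{n∈ℤ} b_n z^n be a formal Laurent series over ℂ with radii of convergence r = limsup_{n→∞} |b_{−n}|^{1/n} and R given by 1/R = limsup_{n→∞} |b_n|^{1/n}, and assume 0 < r < R < ∞. Suppose there exists w ∈ ℂ with |w| = r such that for every k ∈ ℕ∪{0} the series ∑_{n=1}^{∞} (−n)(−n−1)⋯(−n−k+1)·b_{−n}·w^{−n−k} converges (its partial sums tend to a limit in ℂ); that is, every formal derivative of the principal part g⁻ converges at w. Then for every k ∈ ℕ∪{0} and every z ∈ ℂ with r ≤ |z| < R, the k-th formal derivative g^{(k)} converges absolutely at z, i.e. the family (|(n+1)(n+2)⋯(n+k)·b_{n+k}·zⁿ|)_{n∈ℤ} is summable. -/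
open Filter

/-- The inner radius of convergence `r = limsup_{n→∞} |b_{-n}|^{1/n}` (in `[0,∞]`). -/
noncomputable def innerRad (b : ℤ → ℂ) : ENNReal :=
  Filter.limsup (fun n : ℕ => ENNReal.ofReal (‖b (-(n : ℤ))‖) ^ (1 / (n : ℝ))) atTop

/-- The outer radius of convergence `R`, determined by `1/R = limsup_{n→∞} |b_n|^{1/n}`. -/
noncomputable def outerRad (b : ℤ → ℂ) : ENNReal :=
  (Filter.limsup (fun n : ℕ => ENNReal.ofReal (‖b (n : ℤ)‖) ^ (1 / (n : ℝ))) atTop)⁻¹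

lemma outer_bound (b : ℤ → ℂ) {z : ℂ} (hz0 : 0 < ‖z‖)
    (hz : ENNReal.ofReal (‖z‖) < outerRad b) :
    ∃ c : ℝ, 0 < c ∧ c * ‖z‖ < 1 ∧
      ∀ᶠ n : ℕ in atTop, ‖b (n : ℤ)‖ ≤ c ^ n := by
  rw [outerRad] at hz
  set L := Filter.limsup (fun n : ℕ => ENNReal.ofReal (‖b (n : ℤ)‖) ^ (1 / (n : ℝ))) atTop with hL
  have hz' : L < (ENNReal.ofReal (‖z‖))⁻¹ := ENNReal.lt_inv_iff_lt_inv.1 hz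
  obtain ⟨c', hc1, hc2⟩ := exists_between hz'
  have hzfin : (ENNReal.ofReal (‖z‖))⁻¹ < ⊤ := by
    simp [ENNReal.inv_lt_top, ENNReal.ofReal_pos, hz0, norm_pos_iff.1 hz0]
  have hc'top : c' ≠ ⊤ := (hc2.trans hzfin).ne
  have hc'0 : 0 < c' := lt_of_le_of_lt zero_le hc1
  refine ⟨c'.toReal, ENNReal.toReal_pos hc'0.ne' hc'top, ?_, ?_⟩
  · have : c'.toReal < ((ENNReal.ofReal (‖z‖))⁻¹).toReal :=
      ENNReal.toReal_strict_mono hzfin.ne hc2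
    rw [ENNReal.toReal_inv, ENNReal.toReal_ofReal hz0.le] at this
    calc c'.toReal * ‖z‖ < (‖z‖)⁻¹ * ‖z‖ :=
          mul_lt_mul_of_pos_right this hz0
      _ = 1 := inv_mul_cancel₀ hz0.ne'
  · have hev := eventually_lt_of_limsup_lt hc1
    filter_upwards [hev, eventually_ge_atTop 1] with n hn hn1
    have h1 : ENNReal.ofReal (‖b (n : ℤ)‖) < c' ^ n := by
      have := ENNReal.rpow_lt_rpow hn (by positivity : (0:ℝ) < (n:ℝ))
      rwa [← ENNReal.rpow_mul,
        one_div, inv_mul_cancel₀ (by exact_mod_cast Nat.one_le_iff_ne_zero.1 hn1 : (n:ℝ) ≠ 0),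
        ENNReal.rpow_one, ENNReal.rpow_natCast] at this
    have h2 : ENNReal.ofReal (‖b (n : ℤ)‖) ≤ c' ^ n := h1.le
    rw [ENNReal.ofReal_le_iff_le_toReal (by simp [ENNReal.pow_ne_top hc'top])] at h2
    simpa [ENNReal.toReal_pow] using h2

lemma pos_summable (b : ℤ → ℂ) (k : ℕ) {z : ℂ} (hz0 : 0 < ‖z‖)
    (c : ℝ) (hc0 : 0 < c) (hcz : c * ‖z‖ < 1)
    (hev : ∀ᶠ n : ℕ in atTop, ‖b (n : ℤ)‖ ≤ c ^ n) :
    Summable (fun n : ℕ =>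
      ‖(∏ i ∈ Finset.range k, (((n : ℤ) : ℂ) + (i : ℂ) + 1)) * b ((n : ℤ) + (k : ℤ)) *
        z ^ (n : ℤ)‖) := by
  set q := c * ‖z‖ with hq
  have hq0 : 0 ≤ q := by positivity
  have hsum : Summable (fun n : ℕ => (n : ℝ) ^ k * q ^ n) :=
    summable_pow_mul_geometric_of_norm_lt_one k (by rwa [Real.norm_eq_abs, abs_of_nonneg hq0])
  apply summable_of_isBigO_nat hsum
  rw [Asymptotics.isBigO_iff]
  obtain ⟨N, hN⟩ := eventually_atTop.1 hev
  refine ⟨(k+1) ^ k * c ^ k, ?_⟩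
  filter_upwards [eventually_ge_atTop N, eventually_ge_atTop 1] with n hnN hn1
  have hb : ‖b ((n : ℤ) + (k : ℤ))‖ ≤ c ^ (n + k) := by
    have := hN (n + k) (le_trans hnN (Nat.le_add_right n k))
    rwa [Nat.cast_add] at this
  have hprod : ‖∏ i ∈ Finset.range k, (((n : ℤ) : ℂ) + (i : ℂ) + 1)‖
      ≤ ((k+1 : ℝ) * n) ^ k := by
    rw [norm_prod]
    calc ∏ i ∈ Finset.range k, ‖((n : ℤ) : ℂ) + (i : ℂ) + 1‖
        ≤ ∏ _i ∈ Finset.range k, ((k+1 : ℝ) * n) := by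
          apply Finset.prod_le_prod
          · intro i _; positivity
          · intro i hi
            have : (((n : ℤ) : ℂ) + (i : ℂ) + 1) = ((n + i + 1 : ℕ) : ℂ) := by push_cast; ring
            rw [this, Complex.norm_natCast]
            have hik : i + 1 ≤ k := Finset.mem_range.1 hi
            have : (n + i + 1 : ℝ) ≤ (k+1) * n := by
              have : (i : ℝ) + 1 ≤ k := by exact_mod_cast hik
              have hn1' : (1:ℝ) ≤ n := by exact_mod_cast hn1
              nlinarith
            push_cast
            linarith
      _ = ((k+1 : ℝ) * n) ^ k := by rw [Finset.prod_const, Finset.card_range]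
  have hzabs : ‖z ^ (n : ℤ)‖ = ‖z‖ ^ n := by
    rw [zpow_natCast, norm_pow]
  rw [Real.norm_eq_abs, abs_of_nonneg (by positivity), Real.norm_eq_abs,
    abs_of_nonneg (by positivity)]
  calc ‖(∏ i ∈ Finset.range k, (((n : ℤ) : ℂ) + (i : ℂ) + 1)) * b ((n : ℤ) + (k : ℤ)) *
        z ^ (n : ℤ)‖
      = ‖∏ i ∈ Finset.range k, (((n : ℤ) : ℂ) + (i : ℂ) + 1)‖ *
          ‖b ((n : ℤ) + (k : ℤ))‖ * ‖z‖ ^ n := by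
        rw [norm_mul, norm_mul, hzabs]
    _ ≤ ((k+1 : ℝ) * n) ^ k * c ^ (n + k) * ‖z‖ ^ n := by
        apply mul_le_mul (mul_le_mul hprod hb (by positivity) (by positivity)) le_rfl
          (by positivity) (by positivity)
    _ = (k+1) ^ k * c ^ k * ((n : ℝ) ^ k * q ^ n) := by
        rw [hq, mul_pow, pow_add, mul_pow]; ring

lemma neg_summable (b : ℤ → ℂ) (k : ℕ) {z w : ℂ} (hw0 : 0 < ‖w‖)
    (hwz : ‖w‖ ≤ ‖z‖) (C : ℝ)
    (hC : ∀ j : ℕ, ‖(∏ i ∈ Finset.range (k+2), (-((j : ℂ) + 1) - (i : ℂ))) *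
        b (-((j : ℤ) + 1)) * w ^ (-((j : ℤ) + 1) - ((k+2 : ℕ) : ℤ))‖ ≤ C) :
    Summable (fun m : ℕ =>
      ‖(∏ i ∈ Finset.range k, ((↑(-(m:ℤ)) : ℂ) + (i : ℂ) + 1)) *
        b (-(m:ℤ) + (k : ℤ)) * z ^ (-(m:ℤ))‖) := by
  set rr := ‖w‖ with hrr
  have hz0 : 0 < ‖z‖ := lt_of_lt_of_le hw0 hwz
  have hC0 : 0 ≤ C := le_trans (norm_nonneg _) (hC 0)
  rw [← summable_nat_add_iff (k+1)]
  have hg : Summable (fun j : ℕ => 1/((j:ℝ)+1)^2) := by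
    have := (summable_nat_add_iff 1).2 (Real.summable_one_div_nat_pow.2 one_lt_two)
    simpa using this
  apply summable_of_isBigO_nat hg
  rw [Asymptotics.isBigO_iff]
  refine ⟨C * rr^2, ?_⟩
  filter_upwards with j
  set P : ℝ := ∏ i ∈ Finset.range k, ((j:ℝ)+1+i) with hP
  set Q : ℝ := ∏ i ∈ Finset.range (k+2), ((j:ℝ)+1+i) with hQdef
  set B : ℝ := ‖b (-((j:ℤ)+1))‖ with hB
  have hP0 : 0 ≤ P := by apply Finset.prod_nonneg; intro i _; positivity
  have hB0 : 0 ≤ B := norm_nonneg _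
  have hQabs : ‖∏ i ∈ Finset.range (k+2), (-((j : ℂ) + 1) - (i : ℂ))‖ = Q := by
    rw [norm_prod, hQdef]
    apply Finset.prod_congr rfl
    intro i _
    have he : (-((j : ℂ) + 1) - (i : ℂ)) = -((j + 1 + i : ℕ) : ℂ) := by push_cast; ring
    rw [he, norm_neg, Complex.norm_natCast]
    push_cast; ring
  have hwpow : ‖w ^ (-((j : ℤ) + 1) - ((k+2 : ℕ) : ℤ))‖ = (rr ^ (j+k+3))⁻¹ := by
    rw [norm_zpow, show (-((j : ℤ) + 1) - ((k+2 : ℕ) : ℤ)) = -((j+k+3 : ℕ) : ℤ) by push_cast; ring,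
      zpow_neg, zpow_natCast]
  have hCj : Q * B * (rr ^ (j+k+3))⁻¹ ≤ C := by
    have := hC j
    rwa [norm_mul, norm_mul, hQabs, hwpow, ← hB] at this
  have hbidx : (-(↑(j+(k+1)) : ℤ) + (k:ℤ)) = -((j:ℤ)+1) := by push_cast; ring
  have hzpow : ‖z ^ (-(↑(j+(k+1)) : ℤ))‖ = (‖z‖ ^ (j+k+1))⁻¹ := by
    rw [norm_zpow, show (-(↑(j+(k+1)) : ℤ)) = -((j+k+1 : ℕ) : ℤ) by push_cast; ring,
      zpow_neg, zpow_natCast]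
  have hPabs : ‖∏ i ∈ Finset.range k, ((↑(-(↑(j+(k+1)) : ℤ)) : ℂ) + (i : ℂ) + 1)‖ = P := by
    rw [norm_prod]
    have step : ∀ i ∈ Finset.range k,
        ‖(↑(-(↑(j+(k+1)) : ℤ)) : ℂ) + (i : ℂ) + 1‖ = ((j + 1 + (k-1-i) : ℕ) : ℝ) := by
      intro i hi
      have hik : i < k := Finset.mem_range.1 hi
      have hd : j + (k+1) = (j + 1 + (k-1-i)) + (i+1) := by omega
      have he : ((↑(-(↑(j+(k+1)) : ℤ)) : ℤ) : ℂ) + (i : ℂ) + 1 = -((j + 1 + (k-1-i) : ℕ) : ℂ) := by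
        rw [hd]; push_cast; ring
      rw [he, norm_neg, Complex.norm_natCast]
    rw [Finset.prod_congr rfl step, Finset.prod_range_reflect (fun i => ((j + 1 + i : ℕ) : ℝ)) k, hP]
    apply Finset.prod_congr rfl
    intro i _
    push_cast; ring
  have hQP : Q = P * ((j:ℝ)+1+k) * ((j:ℝ)+1+(k+1)) := by
    rw [hQdef, hP, Finset.prod_range_succ, Finset.prod_range_succ]
    push_cast; ring
  rw [Real.norm_eq_abs, abs_of_nonneg (norm_nonneg _), Real.norm_eq_abs,
    abs_of_nonneg (by positivity)]
  rw [norm_mul, norm_mul, hPabs, hbidx, hzpow, ← hB]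
  have h1 : (‖z‖ ^ (j+k+1))⁻¹ ≤ (rr ^ (j+k+1))⁻¹ := by
    apply inv_anti₀ (by positivity)
    exact pow_le_pow_left₀ hw0.le hwz _
  have h2 : P * B * (rr ^ (j+k+1))⁻¹ ≤ C * rr^2 / (((j:ℝ)+1+k) * ((j:ℝ)+1+(k+1))) := by
    rw [le_div_iff₀ (by positivity)]
    have : P * B * (rr ^ (j+k+1))⁻¹ * (((j:ℝ)+1+k) * ((j:ℝ)+1+(k+1)))
        = (Q * B * (rr ^ (j+k+3))⁻¹) * rr^2 := by
      rw [hQP]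
      have hrr0 : rr ≠ 0 := hw0.ne'
      field_simp
      ring
    rw [this]
    exact mul_le_mul_of_nonneg_right hCj (by positivity)
  have h3 : C * rr^2 / (((j:ℝ)+1+k) * ((j:ℝ)+1+(k+1))) ≤ C * rr^2 / (((j:ℝ)+1)^2) := by
    apply div_le_div_of_nonneg_left (by positivity) (by positivity)
    nlinarith [Nat.cast_nonneg (α := ℝ) k, Nat.cast_nonneg (α := ℝ) j]
  calc P * B * (‖z‖ ^ (j+k+1))⁻¹
      ≤ P * B * (rr ^ (j+k+1))⁻¹ := mul_le_mul_of_nonneg_left h1 (by positivity)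
    _ ≤ C * rr^2 / (((j:ℝ)+1+k) * ((j:ℝ)+1+(k+1))) := h2
    _ ≤ C * rr^2 / (((j:ℝ)+1)^2) := h3
    _ = C * rr^2 * (1/((j:ℝ)+1)^2) := by ring

/-- If every formal derivative of the principal part of `g` converges at some point `w` with
`|w| = r`, then every formal derivative `g^{(k)}` converges absolutely at each `z` with
`r ≤ |z| < R`. -/
theorem stmt_17 (b : ℤ → ℂ)
    (hr0 : 0 < innerRad b) (hrR : innerRad b < outerRad b) (hRtop : outerRad b < ⊤)
    (w : ℂ) (hw : ENNReal.ofReal (‖w‖) = innerRad b)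
    (hconv : ∀ k : ℕ, ∃ L : ℂ,
      Tendsto (fun N : ℕ => ∑ n ∈ Finset.range N,
          (∏ i ∈ Finset.range k, (-((n : ℂ) + 1) - (i : ℂ))) * b (-((n : ℤ) + 1)) *
            w ^ (-((n : ℤ) + 1) - (k : ℤ)))
        atTop (nhds L)) :
    ∀ k : ℕ, ∀ z : ℂ,
      innerRad b ≤ ENNReal.ofReal (‖z‖) →
      ENNReal.ofReal (‖z‖) < outerRad b →
      Summable (fun n : ℤ =>
        ‖(∏ i ∈ Finset.range k, ((n : ℂ) + (i : ℂ) + 1)) * b (n + (k : ℤ)) * z ^ n‖) := by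
  intro k z hzr hzR
  have hw0 : 0 < ‖w‖ := by
    by_contra h
    push_neg at h
    have : ‖w‖ = 0 := le_antisymm h (norm_nonneg _)
    rw [this] at hw
    rw [← hw] at hr0
    simp at hr0
  have hwz : ‖w‖ ≤ ‖z‖ := by
    rw [← ENNReal.ofReal_le_ofReal_iff (norm_nonneg z)]
    rw [hw]; exact hzr
  have hz0 : 0 < ‖z‖ := lt_of_lt_of_le hw0 hwz
  rw [summable_int_iff_summable_nat_and_neg]
  constructor
  · obtain ⟨c, hc0, hcz, hev⟩ := outer_bound b hz0 hzR
    exact pos_summable b k hz0 c hc0 hcz hev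
  · obtain ⟨L, hL⟩ := hconv (k+2)
    set S := fun N : ℕ => ∑ n ∈ Finset.range N,
        (∏ i ∈ Finset.range (k+2), (-((n : ℂ) + 1) - (i : ℂ))) * b (-((n : ℤ) + 1)) *
          w ^ (-((n : ℤ) + 1) - ((k+2 : ℕ) : ℤ)) with hS
    have htend : Tendsto (fun j : ℕ =>
        (∏ i ∈ Finset.range (k+2), (-((j : ℂ) + 1) - (i : ℂ))) * b (-((j : ℤ) + 1)) *
          w ^ (-((j : ℤ) + 1) - ((k+2 : ℕ) : ℤ))) atTop (nhds 0) := by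
      have h1 : Tendsto (fun N : ℕ => S (N + 1) - S N) atTop (nhds (L - L)) :=
        ((hL.comp (tendsto_add_atTop_nat 1)).sub hL)
      simp only [sub_self] at h1
      convert h1 using 2 with j
      rw [hS]
      simp only [Finset.sum_range_succ]
      ring
    have hbdd : BddAbove (Set.range (fun j : ℕ => 
        ‖(∏ i ∈ Finset.range (k+2), (-((j : ℂ) + 1) - (i : ℂ))) * b (-((j : ℤ) + 1)) *
          w ^ (-((j : ℤ) + 1) - ((k+2 : ℕ) : ℤ))‖)) := by
      have h2 : Tendsto (fun j : ℕ => 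
          ‖(∏ i ∈ Finset.range (k+2), (-((j : ℂ) + 1) - (i : ℂ))) * b (-((j : ℤ) + 1)) *
            w ^ (-((j : ℤ) + 1) - ((k+2 : ℕ) : ℤ))‖) atTop (nhds 0) := by
        simpa using htend.norm
      exact h2.bddAbove_range
    obtain ⟨C, hC⟩ := hbdd
    have hC' : ∀ j : ℕ, ‖(∏ i ∈ Finset.range (k+2), (-((j : ℂ) + 1) - (i : ℂ))) *
        b (-((j : ℤ) + 1)) * w ^ (-((j : ℤ) + 1) - ((k+2 : ℕ) : ℤ))‖ ≤ C :=
      fun j => hC (Set.mem_range_self j)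
    have hres := neg_summable b k hw0 hwz C hC'
    exact hres
end

section
/- Let g = ∑_{n∈ℤ} b_n z^n be a formal Laurent series over ℂ with radii of convergence r = limsup_{n→∞} |b_{−n}|^{1/n} and R given by 1/R = limsup_{n→∞} |b_n|^{1/n}, and assume 0 < r < R < ∞. Suppose there exist a, w ∈ ℂ with |a| = R and |w| = r such that for every k ∈ ℕ∪{0} both series ∑_{n=0}^{∞} ((n+k)!/n!)·b_{n+k}·aⁿ and ∑_{n=1}^{∞} (−n)(−n−1)⋯(−n−k+1)·b_{−n}·w^{−n−k} converge (their partial sums tend to limits in ℂ). Then for every k ∈ ℕ∪{0} and every z ∈ ℂ with r ≤ |z| ≤ R, the k-th formal derivative g^{(k)} converges absolutely at z, i.e. the family (|(n+1)(n+2)⋯(n+k)·b_{n+k}·zⁿ|)_{n∈ℤ} is summable. -/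
open Filter

private lemma sumBdd {f : ℕ → ℂ}
    (h : ∃ L : ℂ, Tendsto (fun N : ℕ => ∑ n ∈ Finset.range N, f n) atTop (nhds L)) :
    ∃ C : ℝ, ∀ n, ‖f n‖ ≤ C := by
  obtain ⟨L, hL⟩ := h
  have h1 : Tendsto (fun N : ℕ => ∑ n ∈ Finset.range (N + 1), f n) atTop (nhds L) :=
    hL.comp (tendsto_add_atTop_nat 1)
  have h2 : Tendsto f atTop (nhds (L - L)) := by
    have := h1.sub hL
    simpa [Finset.sum_range_succ] using this
  have h3 : Tendsto (fun n => ‖f n‖) atTop (nhds (‖L - L‖)) :=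
    (continuous_norm.tendsto _).comp h2
  obtain ⟨C, hC⟩ := h3.bddAbove_range
  exact ⟨C, fun n => hC ⟨n, rfl⟩⟩

private lemma factProd (n k : ℕ) :
    ((n + k).factorial / n.factorial : ℕ) = ∏ i ∈ Finset.range k, (n + 1 + i) := by
  induction k with
  | zero => simp [Nat.div_self n.factorial_pos]
  | succ k ih =>
    have h : n + (k + 1) = (n + k) + 1 := by ring
    rw [h, Nat.factorial_succ,
      Nat.mul_div_assoc _ (Nat.factorial_dvd_factorial (Nat.le_add_right n k)), ih,
      Finset.prod_range_succ]
    ring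

private lemma prodShift (m k : ℕ) :
    ∏ i ∈ Finset.range (k + 2), ((m:ℝ) + 1 + (i:ℝ))
      = ((m:ℝ) + 1) * ((m:ℝ) + 2) * ∏ i ∈ Finset.range k, (((m:ℝ) + 2) + 1 + (i:ℝ)) := by
  rw [Finset.prod_range_succ', Finset.prod_range_succ']
  have h : ∀ i ∈ Finset.range k, ((m:ℝ) + 1 + ((i + 1 + 1 : ℕ):ℝ)) = ((m:ℝ) + 2) + 1 + (i:ℝ) := by
    intro i _; push_cast; ring
  rw [Finset.prod_congr rfl h]
  push_cast; ring

private lemma prodTail (m k : ℕ) :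
    ∏ i ∈ Finset.range (k + 2), ((m:ℝ) + 1 + (i:ℝ))
      = (∏ i ∈ Finset.range k, ((m:ℝ) + 1 + (i:ℝ)))
        * (((m:ℝ) + (k:ℝ) + 1) * ((m:ℝ) + (k:ℝ) + 2)) := by
  rw [Finset.prod_range_succ, Finset.prod_range_succ]
  push_cast; ring

private lemma prodReflect (m k : ℕ) :
    (∏ i ∈ Finset.range k, ((m:ℝ) + (k:ℝ) - (i:ℝ))) = ∏ i ∈ Finset.range k, ((m:ℝ) + 1 + (i:ℝ)) := by
  rw [← Finset.prod_range_reflect (fun j => (m:ℝ) + 1 + (j:ℝ)) k]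
  apply Finset.prod_congr rfl
  intro i hi
  simp only [Finset.mem_range] at hi
  have h1 : ((k - 1 - i : ℕ) : ℝ) = (k:ℝ) - 1 - (i:ℝ) := by
    have h2 : k - 1 - i = k - (1 + i) := by omega
    rw [h2, Nat.cast_sub (by omega)]
    push_cast; ring
  rw [h1]; ring

private lemma summableComp (D : ℝ) :
    Summable (fun m : ℕ => D / (((m:ℝ) + 1) * ((m:ℝ) + 2))) := by
  have h0 : Summable (fun n : ℕ => 1 / ((n:ℝ) ^ 2)) := Real.summable_one_div_nat_pow.mpr one_lt_two
  have h1 : Summable (fun n : ℕ => 1 / (((n:ℝ) + 1) ^ 2)) := by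
    have := (summable_nat_add_iff (f := fun n : ℕ => 1 / ((n:ℝ) ^ 2)) 1).mpr h0
    refine this.congr fun n => ?_
    push_cast; ring
  have h2 : Summable (fun n : ℕ => 1 / (((n:ℝ) + 1) * ((n:ℝ) + 2))) := by
    refine Summable.of_nonneg_of_le (fun n => by positivity) (fun n => ?_) h1
    rw [div_le_div_iff₀ (by positivity) (by positivity)]
    nlinarith [sq_nonneg ((n:ℝ) + 1)]
  exact (h2.mul_left D).congr fun n => by rw [mul_one_div]

private lemma absProdNat (c : ℕ) (k : ℕ) :
    ‖∏ i ∈ Finset.range k, (((c:ℤ):ℂ) + (i:ℂ) + 1)‖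
      = ∏ i ∈ Finset.range k, ((c:ℝ) + 1 + (i:ℝ)) := by
  rw [norm_prod]
  apply Finset.prod_congr rfl
  intro i _
  have h : (((c:ℤ):ℂ) + (i:ℂ) + 1) = ((((c:ℝ) + 1 + (i:ℝ)) : ℝ) : ℂ) := by push_cast; ring
  rw [h, Complex.norm_real, Real.norm_eq_abs, abs_of_nonneg (by positivity)]

private lemma absProdNegSide (m k : ℕ) :
    ‖∏ i ∈ Finset.range k, (((-(((m+k:ℕ):ℤ) + 1) : ℤ) : ℂ) + (i:ℂ) + 1)‖
      = ∏ i ∈ Finset.range k, ((m:ℝ) + 1 + (i:ℝ)) := by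
  rw [norm_prod, ← prodReflect m k]
  apply Finset.prod_congr rfl
  intro i hi
  simp only [Finset.mem_range] at hi
  have hik : (i:ℝ) ≤ (m:ℝ) + (k:ℝ) := by
    have h3 : (i:ℝ) < (k:ℝ) := by exact_mod_cast hi
    have h4 : (0:ℝ) ≤ (m:ℝ) := Nat.cast_nonneg m
    linarith
  have h : ((-(((m+k:ℕ):ℤ) + 1) : ℤ) : ℂ) + (i:ℂ) + 1 = ((((i:ℝ) - ((m:ℝ) + (k:ℝ))) : ℝ) : ℂ) := by
    push_cast; ring
  rw [h, Complex.norm_real, Real.norm_eq_abs, abs_of_nonpos (by linarith), neg_sub]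

/-- If every formal derivative of the regular part of `g` converges at some `a` with `|a| = R`
and every formal derivative of the principal part converges at some `w` with `|w| = r`, then
every formal derivative `g^{(k)}` converges absolutely at each `z` with `r ≤ |z| ≤ R`. -/
theorem stmt_18 (b : ℤ → ℂ)
    (hr0 : 0 < innerRad b) (hrR : innerRad b < outerRad b) (hRtop : outerRad b < ⊤)
    (a w : ℂ) (ha : ENNReal.ofReal (‖a‖) = outerRad b)
    (hw : ENNReal.ofReal (‖w‖) = innerRad b)
    (hconvPlus : ∀ k : ℕ, ∃ L : ℂ,
      Tendsto (fun N : ℕ => ∑ n ∈ Finset.range N,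
          (((n + k).factorial / n.factorial : ℕ) : ℂ) * b ((n : ℤ) + (k : ℤ)) * a ^ n)
        atTop (nhds L))
    (hconvMinus : ∀ k : ℕ, ∃ L : ℂ,
      Tendsto (fun N : ℕ => ∑ n ∈ Finset.range N,
          (∏ i ∈ Finset.range k, (-((n : ℂ) + 1) - (i : ℂ))) * b (-((n : ℤ) + 1)) *
            w ^ (-((n : ℤ) + 1) - (k : ℤ)))
        atTop (nhds L)) :
    ∀ k : ℕ, ∀ z : ℂ,
      innerRad b ≤ ENNReal.ofReal ‖z‖ →
      ENNReal.ofReal ‖z‖ ≤ outerRad b →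
      Summable (fun n : ℤ =>
        ‖(∏ i ∈ Finset.range k, ((n : ℂ) + (i : ℂ) + 1)) * b (n + (k : ℤ)) * z ^ n‖) := by
  intro k z hz1 hz2
  have hr_pos : 0 < ‖w‖ := ENNReal.ofReal_pos.mp (hw ▸ hr0)
  have hrz : ‖w‖ ≤ ‖z‖ := by
    rw [← ENNReal.ofReal_le_ofReal_iff (norm_nonneg z), hw]; exact hz1
  have hzR : ‖z‖ ≤ ‖a‖ := by
    rw [← ENNReal.ofReal_le_ofReal_iff (norm_nonneg a), ha]; exact hz2
  have hz_pos : 0 < ‖z‖ := lt_of_lt_of_le hr_pos hrz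
  obtain ⟨C, hC⟩ := sumBdd (hconvPlus (k + 2))
  obtain ⟨C', hC'⟩ := sumBdd (hconvMinus (k + 2))
  set R := ‖a‖ with hRdef
  set r := ‖w‖ with hrdef
  set t := ‖z‖ with htdef
  -- real form of the bound on the plus side
  have hBp : ∀ m : ℕ, (∏ i ∈ Finset.range (k+2), ((m:ℝ) + 1 + (i:ℝ)))
      * ‖b ((m:ℤ) + (k:ℤ) + 2)‖ * R ^ m ≤ C := by
    intro m
    have h := hC m
    rw [norm_mul, norm_mul, Complex.norm_natCast, norm_pow, factProd] at h
    have e1 : ((∏ i ∈ Finset.range (k+2), (m + 1 + i) : ℕ) : ℝ)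
        = ∏ i ∈ Finset.range (k+2), ((m:ℝ) + 1 + (i:ℝ)) := by push_cast; rfl
    have e2 : (m:ℤ) + ((k+2:ℕ):ℤ) = (m:ℤ) + (k:ℤ) + 2 := by push_cast; ring
    rw [e1, e2] at h
    exact h
  -- real form of the bound on the minus side
  have hBm : ∀ m : ℕ, (∏ i ∈ Finset.range (k+2), ((m:ℝ) + 1 + (i:ℝ)))
      * ‖b (-((m:ℤ) + 1))‖ * (r ^ (m + k + 3))⁻¹ ≤ C' := by
    intro m
    have h := hC' m
    rw [norm_mul, norm_mul, norm_prod, norm_zpow] at h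
    have e1 : ∀ i ∈ Finset.range (k+2), ‖-((m:ℂ)+1) - (i:ℂ)‖ = (m:ℝ) + 1 + (i:ℝ) := by
      intro i _
      have hh : (-((m:ℂ)+1) - (i:ℂ)) = ((-((m:ℝ) + 1 + (i:ℝ)) : ℝ) : ℂ) := by push_cast; ring
      rw [hh, Complex.norm_real, Real.norm_eq_abs, abs_neg, abs_of_nonneg (by positivity)]
    rw [Finset.prod_congr rfl e1] at h
    have e2 : (-((m:ℤ)+1) - ((k+2:ℕ):ℤ)) = -((m + k + 3 : ℕ) : ℤ) := by push_cast; ring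
    rw [e2, zpow_neg, zpow_natCast] at h
    exact h
  have hC'0 : 0 ≤ C' := le_trans (by positivity) (hBm 0)
  apply Summable.of_nat_of_neg_add_one
  · -- plus side
    rw [← summable_nat_add_iff 2]
    refine Summable.of_nonneg_of_le (fun m => norm_nonneg _) (fun m => ?_)
      (summableComp (C * R ^ 2))
    rw [norm_mul, norm_mul, absProdNat, norm_zpow, zpow_natCast]
    have ep : (∏ i ∈ Finset.range k, (((m+2:ℕ):ℝ) + 1 + (i:ℝ)))
        = ∏ i ∈ Finset.range k, (((m:ℝ) + 2) + 1 + (i:ℝ)) := by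
      apply Finset.prod_congr rfl; intro i _; push_cast; ring
    have eb : ((m+2:ℕ):ℤ) + (k:ℤ) = (m:ℤ) + (k:ℤ) + 2 := by push_cast; ring
    rw [ep, eb, le_div_iff₀ (by positivity)]
    set Q := ∏ i ∈ Finset.range k, (((m:ℝ) + 2) + 1 + (i:ℝ)) with hQ
    set B := ‖b ((m:ℤ) + (k:ℤ) + 2)‖ with hB
    have hQ0 : 0 ≤ Q := by rw [hQ]; positivity
    have hB0 : 0 ≤ B := norm_nonneg _
    have step1 : Q * B * t ^ (m+2) * (((m:ℝ)+1) * ((m:ℝ)+2))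
        ≤ Q * B * R ^ (m+2) * (((m:ℝ)+1)*((m:ℝ)+2)) := by
      have : t ^ (m+2) ≤ R ^ (m+2) := pow_le_pow_left₀ (norm_nonneg z) hzR _
      have h1 : Q * B * t ^ (m+2) ≤ Q * B * R ^ (m+2) :=
        mul_le_mul_of_nonneg_left this (by positivity)
      exact mul_le_mul_of_nonneg_right h1 (by positivity)
    have step2 : Q * B * R ^ (m+2) * (((m:ℝ)+1)*((m:ℝ)+2))
        = ((∏ i ∈ Finset.range (k+2), ((m:ℝ)+1+(i:ℝ))) * B * R ^ m) * R ^ 2 := by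
      rw [prodShift m k, ← hQ]; ring
    calc Q * B * t ^ (m+2) * (((m:ℝ)+1) * ((m:ℝ)+2))
        ≤ Q * B * R ^ (m+2) * (((m:ℝ)+1)*((m:ℝ)+2)) := step1
      _ = ((∏ i ∈ Finset.range (k+2), ((m:ℝ)+1+(i:ℝ))) * B * R ^ m) * R ^ 2 := step2
      _ ≤ C * R ^ 2 := mul_le_mul_of_nonneg_right (hBp m) (by positivity)
  · -- minus side
    rw [← summable_nat_add_iff k]
    refine Summable.of_nonneg_of_le (fun m => norm_nonneg _) (fun m => ?_)
      (summableComp (C' * r ^ 2))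
    rw [norm_mul, norm_mul, absProdNegSide, norm_zpow]
    have e3 : (-(((m+k:ℕ):ℤ) + 1)) = -((m + k + 1 : ℕ):ℤ) := by push_cast; ring
    have e4 : -(((m+k:ℕ):ℤ) + 1) + (k:ℤ) = -((m:ℤ) + 1) := by push_cast; ring
    rw [e4, e3, zpow_neg, zpow_natCast]
    set Q := ∏ i ∈ Finset.range k, ((m:ℝ) + 1 + (i:ℝ)) with hQ
    set B := ‖b (-((m:ℤ) + 1))‖ with hB
    have hQ0 : 0 ≤ Q := by rw [hQ]; positivity
    have hB0 : 0 ≤ B := norm_nonneg _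
    have hk0 : (0:ℝ) ≤ (k:ℝ) := Nat.cast_nonneg k
    have step1 : Q * B * (t ^ (m+k+1))⁻¹ ≤ Q * B * (r ^ (m+k+1))⁻¹ := by
      have h1 : r ^ (m+k+1) ≤ t ^ (m+k+1) := pow_le_pow_left₀ hr_pos.le hrz _
      have h2 : (t ^ (m+k+1))⁻¹ ≤ (r ^ (m+k+1))⁻¹ := by
        apply inv_anti₀ (pow_pos hr_pos _) h1
      exact mul_le_mul_of_nonneg_left h2 (by positivity)
    have step2 : Q * B * (r ^ (m+k+1))⁻¹
        ≤ (C' * r ^ 2) / (((m:ℝ)+(k:ℝ)+1) * ((m:ℝ)+(k:ℝ)+2)) := by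
      rw [le_div_iff₀ (by positivity)]
      have hrne : r ≠ 0 := ne_of_gt hr_pos
      have e : Q * B * (r ^ (m+k+1))⁻¹ * (((m:ℝ)+(k:ℝ)+1) * ((m:ℝ)+(k:ℝ)+2))
          = ((∏ i ∈ Finset.range (k+2), ((m:ℝ)+1+(i:ℝ))) * B * (r ^ (m+k+3))⁻¹) * r ^ 2 := by
        rw [prodTail m k, ← hQ]
        have hp1 : r ^ (m+k+3) = r ^ (m+k+1) * r ^ 2 := by ring
        rw [hp1, mul_inv]
        field_simp
      rw [e]
      exact mul_le_mul_of_nonneg_right (hBm m) (by positivity)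
    have step3 : (C' * r ^ 2) / (((m:ℝ)+(k:ℝ)+1) * ((m:ℝ)+(k:ℝ)+2))
        ≤ (C' * r ^ 2) / (((m:ℝ)+1) * ((m:ℝ)+2)) := by
      apply div_le_div_of_nonneg_left (by positivity) (by positivity)
      nlinarith
    exact le_trans step1 (le_trans step2 step3)
end
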